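/- Let H be a real Hilbert space, let S be a bounded self-adjoint operator on H with ⟨x, S x⟩ ≤ 0 for all x ∈ H, let A be a bounded skew-adjoint operator on H (i.e. ⟨A x, y⟩ = −⟨x, A y⟩ for all x, y), and let λ > 0. Assume λ − S and λ − S − A are bijective with bounded inverses. Then for every f ∈ H, ⟨f, (λ − S − A)⁻¹ f⟩ = sup over g ∈ H of ( 2⟨f, g⟩ − ⟨g, (λ − S) g⟩ − ⟨A g, (λ − S)⁻¹ A g⟩ ). -/
import Mathlib


open RealInnerProductSpace

theorem stmt_1 {H : Type*} [NormedAddCommGroup H] [InnerProductSpace ℝ H] [CompleteSpace H]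
    (S A : H →L[ℝ] H)
    (hS : ∀ x y : H, ⟪S x, y⟫ = ⟪x, S y⟫)
    (hSneg : ∀ x : H, ⟪x, S x⟫ ≤ 0)
    (hA : ∀ x y : H, ⟪A x, y⟫ = -⟪x, A y⟫)
    (lam : ℝ) (hlam : 0 < lam)
    (R T : H →L[ℝ] H)
    (hR1 : ∀ x : H, lam • R x - S (R x) = x)
    (hR2 : ∀ x : H, R (lam • x - S x) = x)
    (hT1 : ∀ x : H, lam • T x - S (T x) - A (T x) = x)
    (hT2 : ∀ x : H, T (lam • x - S x - A x) = x)
    (f : H) :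
    ⟪f, T f⟫ = ⨆ g : H, (2 * ⟪f, g⟫ - ⟪g, lam • g - S g⟫ - ⟪A g, R (A g)⟫) := by
  haveI : Nonempty H := ⟨0⟩
  -- basic facts
  have hA' : ∀ x y : H, ⟪x, A y⟫ = -⟪A x, y⟫ := by
    intro x y; rw [hA x y]; ring
  have hAx : ∀ x : H, ⟪x, A x⟫ = 0 := by
    intro x
    have h1 := hA x x
    have h2 : ⟪A x, x⟫ = ⟪x, A x⟫ := real_inner_comm _ _
    linarith
  have hBsym : ∀ x y : H, ⟪lam • x - S x, y⟫ = ⟪x, lam • y - S y⟫ := by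
    intro x y
    rw [inner_sub_left, inner_sub_right, real_inner_smul_left, real_inner_smul_right, hS]
  have hBpos : ∀ x : H, 0 ≤ ⟪x, lam • x - S x⟫ := by
    intro x
    rw [inner_sub_right, real_inner_smul_right]
    have h1 := hSneg x
    have h2 : (0:ℝ) ≤ ⟪x, x⟫ := real_inner_self_nonneg
    nlinarith
  have hRsym : ∀ x y : H, ⟪R x, y⟫ = ⟪x, R y⟫ := by
    intro x y
    calc ⟪R x, y⟫ = ⟪R x, lam • R y - S (R y)⟫ := by rw [hR1]
      _ = ⟪lam • R x - S (R x), R y⟫ := (hBsym _ _).symm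
      _ = ⟪x, R y⟫ := by rw [hR1]
  have hRpos : ∀ x : H, 0 ≤ ⟪x, R x⟫ := by
    intro x
    have h : ⟪x, R x⟫ = ⟪lam • R x - S (R x), R x⟫ := by rw [hR1]
    rw [h, real_inner_comm]; exact hBpos _
  -- adjoint of T inverts lam - S + A
  have hadj : ∀ x : H, lam • (ContinuousLinearMap.adjoint T) x
      - S ((ContinuousLinearMap.adjoint T) x) + A ((ContinuousLinearMap.adjoint T) x) = x := by
    intro x
    apply ext_inner_right ℝ
    intro y
    have h1 : ⟪lam • (ContinuousLinearMap.adjoint T) x - S ((ContinuousLinearMap.adjoint T) x)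
        + A ((ContinuousLinearMap.adjoint T) x), y⟫
        = ⟪(ContinuousLinearMap.adjoint T) x, lam • y - S y - A y⟫ := by
      rw [inner_add_left, inner_sub_left, real_inner_smul_left, inner_sub_right,
        inner_sub_right, real_inner_smul_right, hS, hA]
      ring
    rw [h1, ContinuousLinearMap.adjoint_inner_left, hT2]
  set g₀ := (ContinuousLinearMap.adjoint T) (f + A (T f)) with hg₀def
  have hgeq : lam • g₀ - S g₀ + A g₀ = f + A (T f) := hadj _
  have hBg₀ : lam • g₀ - S g₀ = f + A (T f) - A g₀ := by
    rw [← hgeq]; abel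
  have hufix : lam • T f - S (T f) = f + A (T f) := by
    have h := hT1 f
    exact sub_eq_iff_eq_add.mp h
  have hRu : R (f + A (T f)) = T f := by rw [← hufix]; exact hR2 (T f)
  have hRg₀' : R (f + A (T f) - A g₀) = g₀ := by rw [← hBg₀]; exact hR2 g₀
  have hRAg₀ : R (A g₀) = T f - g₀ := by
    have h : R (f + A (T f) - A g₀) = R (f + A (T f)) - R (A g₀) := map_sub R _ _
    rw [hRg₀', hRu] at h
    have h2 : g₀ + R (A g₀) = T f := eq_sub_iff_add_eq.mp h
    exact eq_sub_iff_add_eq.mpr (by rw [add_comm]; exact h2)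
  -- the symmetric positive operator M
  set M : H → H := fun h => lam • h - S h - A (R (A h)) with hM
  have hMg₀ : M g₀ = f := by
    show lam • g₀ - S g₀ - A (R (A g₀)) = f
    rw [hRAg₀, hBg₀, map_sub]
    abel
  have hMsub : ∀ a b : H, M (a - b) = M a - M b := by
    intro a b
    show lam • (a - b) - S (a - b) - A (R (A (a - b)))
      = (lam • a - S a - A (R (A a))) - (lam • b - S b - A (R (A b)))
    rw [smul_sub, map_sub S, map_sub A a b, map_sub R, map_sub A]
    abel
  have hARAsym : ∀ x y : H, ⟪A (R (A x)), y⟫ = ⟪x, A (R (A y))⟫ := by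
    intro x y
    rw [hA, hRsym, hA]
    ring
  have hMsym : ∀ x y : H, ⟪M x, y⟫ = ⟪x, M y⟫ := by
    intro x y
    show ⟪lam • x - S x - A (R (A x)), y⟫ = ⟪x, lam • y - S y - A (R (A y))⟫
    rw [inner_sub_left, inner_sub_right, hBsym, hARAsym]
  have hgAR : ∀ g : H, ⟪g, M g⟫ = ⟪g, lam • g - S g⟫ + ⟪A g, R (A g)⟫ := by
    intro g
    show ⟪g, lam • g - S g - A (R (A g))⟫ = _
    rw [inner_sub_right, hA']
    ring
  have hMpos : ∀ g : H, 0 ≤ ⟪g, M g⟫ := by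
    intro g
    rw [hgAR]
    exact add_nonneg (hBpos g) (hRpos (A g))
  have hfg₀ : ⟪f, g₀⟫ = ⟪f, T f⟫ := by
    rw [hg₀def, ContinuousLinearMap.adjoint_inner_right, inner_add_right, hAx,
      real_inner_comm]
    ring
  -- the key identity
  have hkey : ∀ g : H, 2 * ⟪f, g⟫ - ⟪g, lam • g - S g⟫ - ⟪A g, R (A g)⟫
      = ⟪f, T f⟫ - ⟪g - g₀, M (g - g₀)⟫ := by
    intro g
    have e1 : ⟪g - g₀, M (g - g₀)⟫
        = ⟪g, M g⟫ - ⟪g, M g₀⟫ - ⟪g₀, M g⟫ + ⟪g₀, M g₀⟫ := by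
      rw [hMsub, inner_sub_left, inner_sub_right g (M g) (M g₀),
        inner_sub_right g₀ (M g) (M g₀)]
      ring
    have e2 : ⟪g₀, M g⟫ = ⟪f, g⟫ := by rw [← hMsym, hMg₀]
    have e3 : ⟪g, M g₀⟫ = ⟪f, g⟫ := by rw [hMg₀, real_inner_comm]
    have e4 : ⟪g₀, M g₀⟫ = ⟪f, g₀⟫ := by rw [hMg₀, real_inner_comm]
    have e5 := hgAR g
    linarith [hfg₀]
  have hub : ∀ g : H, 2 * ⟪f, g⟫ - ⟪g, lam • g - S g⟫ - ⟪A g, R (A g)⟫ ≤ ⟪f, T f⟫ := by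
    intro g
    rw [hkey g]
    linarith [hMpos (g - g₀)]
  have hM0 : M (g₀ - g₀) = 0 := by rw [hMsub, sub_self]
  have hat : 2 * ⟪f, g₀⟫ - ⟪g₀, lam • g₀ - S g₀⟫ - ⟪A g₀, R (A g₀)⟫ = ⟪f, T f⟫ := by
    rw [hkey g₀, hM0, inner_zero_right]
    ring
  apply le_antisymm
  · rw [← hat]
    exact le_ciSup ⟨⟪f, T f⟫, by rintro x ⟨g, rfl⟩; exact hub g⟩ g₀
  · exact ciSup_le hub
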